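/- arXiv:0705.1107 — 2 statements merged into one kernel-verified Lean document; each statement's English description precedes it below -/
import Mathlib

section
/- Let V:ℝ³→ℝ be continuous, nonnegative, homogeneous of degree s>2 and satisfy V(x) − Ω²r²/4 → ∞ as |x|→∞, let g > 0, Ω > 0, and set γ = Ω^{−2(s+3)/(s−2)} g. Then the TF quantities obey the scaling relations: Ω^{−2s/(s−2)} E^TF_{g,Ω} = E^TF_{γ,1}, Ω^{−2s/(s−2)} μ^TF_{g,Ω} = μ^TF_{γ,1}, and Ω^{6/(s−2)} ρ^TF_{g,Ω}(Ω^{2/(s−2)} x) = ρ^TF_{γ,1}(x) for all x ∈ ℝ³. Moreover γ = ω^{−2(s+3)/(s−2)} where ω = g^{−(s−2)/(2s+6)} Ω. -/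
noncomputable section

open MeasureTheory Filter Topology Real

abbrev E3 := EuclideanSpace ℝ (Fin 3)

/-- distance from the z-axis -/
def radial (x : E3) : ℝ := Real.sqrt ((x 0)^2 + (x 1)^2)

/-- k-th component of the vector potential `A_Ω(x) = (Ω/2)(e_z ∧ x)` -/
def Avec (Ω : ℝ) (x : E3) : Fin 3 → ℝ := ![-(Ω/2) * x 1, (Ω/2) * x 0, 0]

/-- covariant (magnetic) derivative `(∂_k - i A_k) φ` -/
def covD (Ω : ℝ) (φ : E3 → ℂ) (k : Fin 3) : E3 → ℂ := fun x =>
  fderiv ℝ φ x (EuclideanSpace.single k 1) - Complex.I * (Avec Ω x k : ℂ) * φ x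

/-- `|(∇ - iA_Ω)φ|²` -/
def magKin (Ω : ℝ) (φ : E3 → ℂ) (x : E3) : ℝ := ∑ k : Fin 3, ‖covD Ω φ k x‖^2

/-- homogeneity of degree `s`: `V (λ x) = λ^s V x` for `λ > 0` -/
def HomogeneousOfDegree (V : E3 → ℝ) (s : ℝ) : Prop :=
  ∀ l : ℝ, 0 < l → ∀ x : E3, V (l • x) = l ^ s * V x

/-- trapping: `V - Ω² r²/4 → ∞` as `|x| → ∞`, for every `Ω ≥ 0` -/
def IsTrapping (V : E3 → ℝ) : Prop :=
  ∀ Ω : ℝ, 0 ≤ Ω →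
    Tendsto (fun x : E3 => V x - Ω^2 * (radial x)^2 / 4) (cocompact E3) atTop

/-- Thomas-Fermi functional -/
def TFtot (V : E3 → ℝ) (g Ω : ℝ) (ρ : E3 → ℝ) : ℝ :=
  ∫ x : E3, (V x * ρ x - Ω^2 * (radial x)^2 / 4 * ρ x + g * (ρ x)^2)

/-- admissible (normalized) TF densities -/
def TFadm (V : E3 → ℝ) (ρ : E3 → ℝ) : Prop :=
  (∀ x, 0 ≤ ρ x) ∧ MemLp ρ 2 volume ∧
    Integrable (fun x => V x * ρ x) ∧
    Integrable (fun x => (radial x)^2 * ρ x) ∧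
    (∫ x : E3, ρ x) = 1

/-- Thomas-Fermi ground state energy `E^TF_{g,Ω}` -/
def TFenergy (V : E3 → ℝ) (g Ω : ℝ) : ℝ :=
  sInf {e : ℝ | ∃ ρ : E3 → ℝ, TFadm V ρ ∧ TFtot V g Ω ρ = e}

def IsTFMinimizer (V : E3 → ℝ) (g Ω : ℝ) (ρ : E3 → ℝ) : Prop :=
  TFadm V ρ ∧ TFtot V g Ω ρ = TFenergy V g Ω

/-- the `L^∞` (essential supremum) norm -/
def supNorm (ρ : E3 → ℝ) : ℝ := (eLpNorm ρ ⊤ volume).toReal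

/-- Gross-Pitaevskii functional -/
def GPtot (V : E3 → ℝ) (g Ω : ℝ) (φ : E3 → ℂ) : ℝ :=
  ∫ x : E3, (magKin Ω φ x + V x * ‖φ x‖^2 - Ω^2 * (radial x)^2 / 4 * ‖φ x‖^2 + g * ‖φ x‖^4)

/-- admissible (normalized) GP states -/
def GPadm (V : E3 → ℝ) (Ω : ℝ) (φ : E3 → ℂ) : Prop :=
  Differentiable ℝ φ ∧ MemLp φ 4 volume ∧
    Integrable (fun x => V x * ‖φ x‖^2) ∧
    Integrable (fun x => (radial x)^2 * ‖φ x‖^2) ∧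
    Integrable (fun x => magKin Ω φ x) ∧
    (∫ x : E3, ‖φ x‖^2) = 1

/-- Gross-Pitaevskii ground state energy `E^GP_{g,Ω}` -/
def GPenergy (V : E3 → ℝ) (g Ω : ℝ) : ℝ :=
  sInf {e : ℝ | ∃ φ : E3 → ℂ, GPadm V Ω φ ∧ GPtot V g Ω φ = e}

/-- sum of the pair interactions `Σ_{i<j} v(|x_i - x_j|)` -/
def pairSum (v : ℝ → ℝ) {N : ℕ} (X : Fin N → E3) : ℝ :=
  ∑ i : Fin N, ∑ j : Fin N, if i < j then v (dist (X i) (X j)) else 0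

/-- many-body magnetic kinetic energy density `Σ_j |(∇_j - iA_Ω(x_j))Ψ|²` -/
def qmKin (Ω : ℝ) {N : ℕ} (Ψ : (Fin N → E3) → ℂ) (X : Fin N → E3) : ℝ :=
  ∑ j : Fin N, ∑ k : Fin 3,
    ‖fderiv ℝ Ψ X (Pi.single j (EuclideanSpace.single k 1))
      - Complex.I * (Avec Ω (X j) k : ℂ) * Ψ X‖^2

/-- integrand of the many-body quadratic form `⟨Ψ, H_N Ψ⟩` -/
def qmDensity (V : E3 → ℝ) (v : ℝ → ℝ) (Ω : ℝ) {N : ℕ}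
    (Ψ : (Fin N → E3) → ℂ) (X : Fin N → E3) : ℝ :=
  qmKin Ω Ψ X
    + ((∑ j : Fin N, (V (X j) - Ω^2 * (radial (X j))^2 / 4)) + pairSum v X) * ‖Ψ X‖^2

/-- admissible (symmetric, normalized, regular) many-body wave functions -/
def QMadm (N : ℕ) (Ψ : (Fin N → E3) → ℂ) : Prop :=
  (∀ σ : Equiv.Perm (Fin N), ∀ X : Fin N → E3, Ψ (X ∘ σ) = Ψ X) ∧
    Differentiable ℝ Ψ ∧ MemLp Ψ 2 volume ∧
    (∫ X : Fin N → E3, ‖Ψ X‖^2) = 1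

/-- many-body ground state energy `E^QM_{g,Ω}(N)`: infimum of the quadratic form of `H_N`
over normalized symmetric states in the form domain -/
def QMenergy (V : E3 → ℝ) (v : ℝ → ℝ) (Ω : ℝ) (N : ℕ) : ℝ :=
  sInf {e : ℝ | ∃ Ψ : (Fin N → E3) → ℂ, QMadm N Ψ ∧
    Integrable (qmDensity V v Ω Ψ) ∧ (∫ X : Fin N → E3, qmDensity V v Ω Ψ X) = e}

/-- `w` has scattering length `a` -/
def HasScatteringLength (w : ℝ → ℝ) (a : ℝ) : Prop :=
  ∃ u : ℝ → ℝ, u 0 = 0 ∧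
    (∀ r : ℝ, 0 < r → DifferentiableAt ℝ u r) ∧
    (∀ r : ℝ, 0 < r → HasDerivAt (deriv u) (w r * u r / 2) r) ∧
    Tendsto (deriv u) atTop (nhds 1) ∧
    Tendsto (fun r => r - u r) atTop (nhds a)

def HasFiniteRange (w : ℝ → ℝ) : Prop := ∃ R : ℝ, 0 < R ∧ ∀ r : ℝ, R ≤ r → w r = 0

/-- the scaled interaction `v(r) = a⁻² v₁(r/a)` (with scattering length `a`) -/
def scaledInteraction (v₁ : ℝ → ℝ) (a : ℝ) : ℝ → ℝ := fun r => (a^2)⁻¹ * v₁ (r / a)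

/-- normalized one-particle density of a many-body wave function -/
def oneDensity (N : ℕ) (Ψ : (Fin N → E3) → ℂ) (x : E3) : ℝ :=
  ∫ Y : {i : Fin N // i.val ≠ 0} → E3,
    ‖Ψ (fun i => if h : i.val = 0 then x else Y ⟨i, h⟩)‖^2


/-!
With `l = Ω^{2/(s-2)}`, the mass-preserving dilation `ρ ↦ l³ ρ(l ·)` turns, by the homogeneity of
`V`, each term of the TF functional with parameters `(g, Ω)` into `l^s` times the corresponding
term with parameters `(γ, 1)`. It is a bijection of admissible densities and maps TF profiles to
TF profiles, which gives the energy and density relations. The chemical potential is then pinned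
down by the normalization, since the mass of `c [t + h]₊` is strictly increasing in `t` as long as
it is nonzero.
-/

open Pointwise

lemma radial_smul {l : ℝ} (hl : 0 ≤ l) (x : E3) : radial (l • x) = l * radial x := by
  simp only [radial, PiLp.smul_apply, smul_eq_mul]
  rw [show (l * x 0)^2 + (l * x 1)^2 = l^2 * ((x 0)^2 + (x 1)^2) by ring,
    Real.sqrt_mul (sq_nonneg l), Real.sqrt_sq hl]

theorem integral_pow_finrank_mul_comp_smul {E : Type*} [NormedAddCommGroup E] [NormedSpace ℝ E]
    [MeasurableSpace E] [BorelSpace E] [FiniteDimensional ℝ E] (μ : Measure E)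
    [μ.IsAddHaarMeasure] {l : ℝ} (hl : 0 < l) (f : E → ℝ) :
    ∫ x, l ^ Module.finrank ℝ E * f (l • x) ∂μ = ∫ x, f x ∂μ := by
  rw [integral_const_mul, Measure.integral_comp_smul, smul_eq_mul,
    abs_of_pos (by positivity), ← mul_assoc, mul_inv_cancel₀ (by positivity), one_mul]

def massDilation (l : ℝ) (ρ : E3 → ℝ) : E3 → ℝ := fun x => l ^ 3 * ρ (l • x)

lemma integral_massDilation {l : ℝ} (hl : 0 < l) (ρ : E3 → ℝ) :
    ∫ x, massDilation l ρ x = ∫ x, ρ x := by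
  rw [← integral_pow_finrank_mul_comp_smul volume hl ρ, finrank_euclideanSpace_fin]
  rfl

lemma massDilation_massDilation_inv {l : ℝ} (hl : l ≠ 0) (ρ : E3 → ℝ) :
    massDilation l (massDilation l⁻¹ ρ) = ρ := by
  ext x
  simp only [massDilation, smul_smul, inv_mul_cancel₀ hl, one_smul, ← mul_assoc, ← mul_pow,
    mul_inv_cancel₀ hl, one_pow, one_mul]

section Dilation

variable {V : E3 → ℝ} {s l : ℝ}

lemma TFadm.massDilation (hV : HomogeneousOfDegree V s) (hl : 0 < l) {ρ : E3 → ℝ}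
    (hρ : TFadm V ρ) : TFadm V (_root_.massDilation l ρ) := by
  obtain ⟨hρ_nonneg, hρ_L2, hVρ, hrρ, hρ_mass⟩ := hρ
  have hρ_meas : AEStronglyMeasurable ρ volume := hρ_L2.aestronglyMeasurable
  have hρ_meas' : AEStronglyMeasurable (_root_.massDilation l ρ) volume :=
    (hρ_meas.comp_quasiMeasurePreserving
      (Measure.quasiMeasurePreserving_smul volume hl.ne')).const_mul _
  refine ⟨fun x => mul_nonneg (by positivity) (hρ_nonneg _), ?_, ?_, ?_, ?_⟩
  · rw [memLp_two_iff_integrable_sq hρ_meas']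
    refine ((((memLp_two_iff_integrable_sq hρ_meas).1 hρ_L2).comp_smul hl.ne').const_mul
      ((l ^ 3) ^ 2)).congr (Eventually.of_forall fun x => ?_)
    simp only [_root_.massDilation]
    ring
  · refine ((hVρ.comp_smul hl.ne').const_mul (l ^ 3 * (l ^ s)⁻¹)).congr
      (Eventually.of_forall fun x => ?_)
    have : l ^ s ≠ 0 := (Real.rpow_pos_of_pos hl s).ne'
    simp only [_root_.massDilation, hV l hl x]
    field_simp
  · refine ((hrρ.comp_smul hl.ne').const_mul l).congr (Eventually.of_forall fun x => ?_)
    simp only [_root_.massDilation, radial_smul hl.le x]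
    ring
  · rw [integral_massDilation hl, hρ_mass]

variable {g Ω G W : ℝ}

lemma TFtot_massDilation (hV : HomogeneousOfDegree V s) (hl : 0 < l)
    (hG : G * l ^ (s + 3) = g) (hW : l ^ (s - 2) * W ^ 2 = Ω ^ 2) (ρ : E3 → ℝ) :
    TFtot V G W (massDilation l ρ) = (l ^ s)⁻¹ * TFtot V g Ω ρ := by
  have hls : l ^ s ≠ 0 := (Real.rpow_pos_of_pos hl s).ne'
  have h3 : l ^ (s + 3) = l ^ s * l ^ 3 := by exact_mod_cast Real.rpow_add_natCast hl.ne' s 3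
  have h2 : l ^ (s - 2) = l ^ s / l ^ 2 := by exact_mod_cast Real.rpow_sub_natCast hl.ne' s 2
  have hpt : ∀ x : E3,
      V x * massDilation l ρ x - W ^ 2 * radial x ^ 2 / 4 * massDilation l ρ x
        + G * massDilation l ρ x ^ 2
      = (l ^ s)⁻¹ * massDilation l (fun y =>
          V y * ρ y - Ω ^ 2 * radial y ^ 2 / 4 * ρ y + g * ρ y ^ 2) x := by
    intro x
    simp only [massDilation, hV l hl x, radial_smul hl.le x, ← hG, ← hW, h3, h2]
    field_simp
  rw [TFtot, integral_congr_ae (Eventually.of_forall hpt), integral_const_mul,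
    integral_massDilation hl, TFtot]

lemma TFenergy_eq_of_scaling (hV : HomogeneousOfDegree V s) (hl : 0 < l)
    (hG : G * l ^ (s + 3) = g) (hW : l ^ (s - 2) * W ^ 2 = Ω ^ 2) :
    TFenergy V G W = (l ^ s)⁻¹ * TFenergy V g Ω := by
  have hset : {e : ℝ | ∃ ρ, TFadm V ρ ∧ TFtot V G W ρ = e}
      = (l ^ s)⁻¹ • {e : ℝ | ∃ ρ, TFadm V ρ ∧ TFtot V g Ω ρ = e} := by
    ext e
    constructor
    · rintro ⟨ρ, hρ, rfl⟩
      refine Set.mem_smul_set.2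
        ⟨TFtot V g Ω (massDilation l⁻¹ ρ), ⟨_, hρ.massDilation hV (inv_pos.2 hl), rfl⟩, ?_⟩
      rw [smul_eq_mul, ← TFtot_massDilation hV hl hG hW, massDilation_massDilation_inv hl.ne']
    · intro he
      obtain ⟨_, ⟨ρ, hρ, rfl⟩, rfl⟩ := Set.mem_smul_set.1 he
      exact ⟨_, hρ.massDilation hV hl, TFtot_massDilation hV hl hG hW ρ⟩
  rw [TFenergy, TFenergy, hset, Real.sInf_smul_of_nonneg (by positivity), smul_eq_mul]

end Dilation

def tfProfile (V : E3 → ℝ) (g Ω μ : ℝ) (x : E3) : ℝ :=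
  (2 * g)⁻¹ * max (μ + Ω ^ 2 * radial x ^ 2 / 4 - V x) 0

lemma massDilation_tfProfile {V : E3 → ℝ} {s l g Ω G W : ℝ} (hV : HomogeneousOfDegree V s)
    (hl : 0 < l) (hG : G * l ^ (s + 3) = g) (hW : l ^ (s - 2) * W ^ 2 = Ω ^ 2) (μ : ℝ) :
    massDilation l (tfProfile V g Ω μ) = tfProfile V G W ((l ^ s)⁻¹ * μ) := by
  have hls : 0 < l ^ s := Real.rpow_pos_of_pos hl s
  have h3 : l ^ (s + 3) = l ^ s * l ^ 3 := by exact_mod_cast Real.rpow_add_natCast hl.ne' s 3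
  have h2 : l ^ (s - 2) = l ^ s / l ^ 2 := by exact_mod_cast Real.rpow_sub_natCast hl.ne' s 2
  ext x
  have harg : μ + Ω ^ 2 * radial (l • x) ^ 2 / 4 - V (l • x)
      = l ^ s * ((l ^ s)⁻¹ * μ + W ^ 2 * radial x ^ 2 / 4 - V x) := by
    rw [hV l hl x, radial_smul hl.le x, ← hW, h2]
    field_simp
  simp only [massDilation, tfProfile]
  have hmax : ∀ y, max (l ^ s * y) 0 = l ^ s * max y 0 := fun y => by
    rw [mul_max_of_nonneg _ _ hls.le, mul_zero]
  rw [harg, hmax, ← hG, h3]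
  field_simp

lemma max_add_eq_zero_of_lt_of_max_add_eq {t₁ t₂ a : ℝ} (hlt : t₁ < t₂)
    (h : max (t₁ + a) 0 = max (t₂ + a) 0) : max (t₂ + a) 0 = 0 := by
  rcases le_or_gt (t₂ + a) 0 with ha | ha
  · exact max_eq_right ha
  · have : max (t₁ + a) 0 < t₂ + a := max_lt (by linarith) ha
    rw [max_eq_left ha.le] at h ⊢
    linarith

theorem eq_of_integral_mul_max_add_eq_one {α : Type*} [MeasurableSpace α] {m : Measure α}
    {c : ℝ} (hc : 0 < c) (h : α → ℝ) {t₁ t₂ : ℝ}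
    (h₁ : ∫ x, c * max (t₁ + h x) 0 ∂m = 1) (h₂ : ∫ x, c * max (t₂ + h x) 0 ∂m = 1) :
    t₁ = t₂ := by
  suffices key : ∀ {t₁ t₂ : ℝ}, t₁ < t₂ → ∫ x, c * max (t₁ + h x) 0 ∂m = 1 →
      ∫ x, c * max (t₂ + h x) 0 ∂m = 1 → False by
    rcases lt_trichotomy t₁ t₂ with hlt | heq | hlt
    exacts [(key hlt h₁ h₂).elim, heq, (key hlt h₂ h₁).elim]
  intro t₁ t₂ hlt h₁ h₂
  set f₁ := fun x => c * max (t₁ + h x) 0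
  set f₂ := fun x => c * max (t₂ + h x) 0
  have hi₁ : Integrable f₁ m := Integrable.of_integral_ne_zero (by rw [h₁]; exact one_ne_zero)
  have hi₂ : Integrable f₂ m := Integrable.of_integral_ne_zero (by rw [h₂]; exact one_ne_zero)
  have hle : f₁ ≤ᵐ[m] f₂ := Eventually.of_forall fun x =>
    mul_le_mul_of_nonneg_left (max_le_max (by linarith) le_rfl) hc.le
  have heq : f₁ =ᵐ[m] f₂ := (integral_eq_iff_of_ae_le hi₁ hi₂ hle).1 (h₁.trans h₂.symm)
  have hzero : f₂ =ᵐ[m] 0 := heq.mono fun x hx => by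
    simp only [f₁, f₂, mul_right_inj' hc.ne'] at hx
    simp [f₂, max_add_eq_zero_of_lt_of_max_add_eq hlt hx]
  rw [integral_congr_ae hzero] at h₂
  simp at h₂

lemma eq_of_integral_tfProfile_eq_one {V : E3 → ℝ} {g Ω μ₁ μ₂ : ℝ} (hg : 0 < g)
    (h₁ : ∫ x, tfProfile V g Ω μ₁ x = 1) (h₂ : ∫ x, tfProfile V g Ω μ₂ x = 1) : μ₁ = μ₂ := by
  simp only [tfProfile, add_sub_assoc] at h₁ h₂
  exact eq_of_integral_mul_max_add_eq_one (by positivity) _ h₁ h₂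

lemma rpow_mul_eq_rpow_inv_mul_rpow {g Ω e : ℝ} (hg : 0 ≤ g) (hΩ : 0 ≤ Ω) (he : e ≠ 0) :
    Ω ^ e * g = (g ^ e⁻¹ * Ω) ^ e := by
  rw [Real.mul_rpow (Real.rpow_nonneg hg _) hΩ, Real.rpow_inv_rpow hg he, mul_comm]

theorem tf_scaling_strong_rotation_general
    (V : E3 → ℝ) (s : ℝ)
    (hs : 2 < s) (hV_hom : HomogeneousOfDegree V s)
    (g Ω : ℝ) (hg : 0 < g) (hΩ : 0 < Ω)
    (μ μγ : ℝ)
    -- `μ` is the chemical potential for `(g, Ω)`: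
    (hμ : (∫ x : E3, (2*g)⁻¹ * max (μ + Ω^2 * (radial x)^2/4 - V x) 0) = 1)
    -- `μγ` is the chemical potential for `(γ, 1)` with `γ = Ω^{-2(s+3)/(s-2)} g`:
    (hμγ : (∫ x : E3, (2 * (Ω ^ (-(2 * (s + 3)) / (s - 2)) * g))⁻¹ *
      max (μγ + (radial x)^2/4 - V x) 0) = 1) :
    Ω ^ (-(2 * s / (s - 2))) * TFenergy V g Ω =
        TFenergy V (Ω ^ (-(2 * (s + 3)) / (s - 2)) * g) 1 ∧
      Ω ^ (-(2 * s / (s - 2))) * μ = μγ ∧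
      (∀ x : E3,
        Ω ^ ((6 : ℝ) / (s - 2)) *
          ((2*g)⁻¹ * max (μ + Ω^2 * (radial (Ω ^ ((2 : ℝ) / (s - 2)) • x))^2/4
            - V (Ω ^ ((2 : ℝ) / (s - 2)) • x)) 0) =
        (2 * (Ω ^ (-(2 * (s + 3)) / (s - 2)) * g))⁻¹ *
          max (μγ + (radial x)^2/4 - V x) 0) ∧
      Ω ^ (-(2 * (s + 3)) / (s - 2)) * g =
        (g ^ (-((s - 2) / (2 * s + 6))) * Ω) ^ (-(2 * (s + 3)) / (s - 2)) := by
  have hs2 : s - 2 ≠ 0 := by linarith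
  set l := Ω ^ ((2 : ℝ) / (s - 2))
  set γ := Ω ^ (-(2 * (s + 3)) / (s - 2)) * g
  have hl : 0 < l := Real.rpow_pos_of_pos hΩ _
  have hpow (a : ℝ) : l ^ a = Ω ^ (2 / (s - 2) * a) := (Real.rpow_mul hΩ.le _ _).symm
  have hls : Ω ^ (-(2 * s / (s - 2))) = (l ^ s)⁻¹ := by
    rw [hpow, ← Real.rpow_neg hΩ.le]; ring_nf
  have hG : γ * l ^ (s + 3) = g := by
    rw [hpow, mul_right_comm, ← Real.rpow_add hΩ,
      show -(2 * (s + 3)) / (s - 2) + 2 / (s - 2) * (s + 3) = 0 by ring, Real.rpow_zero, one_mul]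
  have hW : l ^ (s - 2) * 1 ^ 2 = Ω ^ 2 := by
    rw [hpow, div_mul_cancel₀ _ hs2, one_pow, mul_one, Real.rpow_two]
  have hl3 : Ω ^ ((6 : ℝ) / (s - 2)) = l ^ 3 := by
    rw [← Real.rpow_natCast, hpow]; ring_nf
  have hprofile := massDilation_tfProfile hV_hom hl hG hW μ
  have hμγ' : ∫ x, tfProfile V γ 1 μγ x = 1 := by
    simpa only [tfProfile, one_pow, one_mul] using hμγ
  have hμ' : (l ^ s)⁻¹ * μ = μγ := by
    refine eq_of_integral_tfProfile_eq_one (by positivity) ?_ hμγ'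
    rw [← hprofile, integral_massDilation hl]
    exact hμ
  refine ⟨by rw [hls, TFenergy_eq_of_scaling hV_hom hl hG hW], by rwa [hls], fun x => ?_, ?_⟩
  · rw [hl3]
    simpa only [massDilation, tfProfile, hμ', one_pow, one_mul] using congrFun hprofile x
  · rw [show -((s - 2) / (2 * s + 6)) = (-(2 * (s + 3)) / (s - 2))⁻¹ by field_simp; ring]
    exact rpow_mul_eq_rpow_inv_mul_rpow hg.le hΩ.le (div_ne_zero (by linarith) hs2)

/-- **Eqs. (2.17)-(2.19)** (TF scaling relations for strong rotation): with
`γ = Ω^{-2(s+3)/(s-2)} g`, one has `Ω^{-2s/(s-2)} E^TF_{g,Ω} = E^TF_{γ,1}`,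
`Ω^{-2s/(s-2)} μ^TF_{g,Ω} = μ^TF_{γ,1}`,
`Ω^{6/(s-2)} ρ^TF_{g,Ω}(Ω^{2/(s-2)} x) = ρ^TF_{γ,1}(x)`, and moreover
`γ = ω^{-2(s+3)/(s-2)}` where `ω = g^{-(s-2)/(2s+6)} Ω`. -/
theorem tf_scaling_strong_rotation
    (V : E3 → ℝ) (s : ℝ)
    (hV_cont : Continuous V) (hV_nonneg : ∀ x, 0 ≤ V x)
    (hs : 2 < s) (hV_hom : HomogeneousOfDegree V s) (hV_trap : IsTrapping V)
    (g Ω : ℝ) (hg : 0 < g) (hΩ : 0 < Ω)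
    (μ μγ : ℝ)
    -- `μ` is the chemical potential for `(g, Ω)`:
    (hμ : (∫ x : E3, (2*g)⁻¹ * max (μ + Ω^2 * (radial x)^2/4 - V x) 0) = 1)
    -- `μγ` is the chemical potential for `(γ, 1)` with `γ = Ω^{-2(s+3)/(s-2)} g`:
    (hμγ : (∫ x : E3, (2 * (Ω ^ (-(2 * (s + 3)) / (s - 2)) * g))⁻¹ *
      max (μγ + (radial x)^2/4 - V x) 0) = 1) :
    Ω ^ (-(2 * s / (s - 2))) * TFenergy V g Ω =
        TFenergy V (Ω ^ (-(2 * (s + 3)) / (s - 2)) * g) 1 ∧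
      Ω ^ (-(2 * s / (s - 2))) * μ = μγ ∧
      (∀ x : E3,
        Ω ^ ((6 : ℝ) / (s - 2)) *
          ((2*g)⁻¹ * max (μ + Ω^2 * (radial (Ω ^ ((2 : ℝ) / (s - 2)) • x))^2/4
            - V (Ω ^ ((2 : ℝ) / (s - 2)) • x)) 0) =
        (2 * (Ω ^ (-(2 * (s + 3)) / (s - 2)) * g))⁻¹ *
          max (μγ + (radial x)^2/4 - V x) 0) ∧
      Ω ^ (-(2 * (s + 3)) / (s - 2)) * g =
        (g ^ (-((s - 2) / (2 * s + 6))) * Ω) ^ (-(2 * (s + 3)) / (s - 2)) :=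
  tf_scaling_strong_rotation_general V s hs hV_hom g Ω hg hΩ μ μγ hμ hμγ
end
end

section
/- Let V:ℝ³→ℝ be continuous, nonnegative, homogeneous of degree s>2 and satisfy V(x) − Ω²r²/4 → ∞ as |x|→∞, and let g > 0, Ω ≥ 0. Let φ^GP be a normalized minimizer of the GP functional which is twice continuously differentiable and satisfies the GP equation [−(∇ − iA_Ω)² + V − Ω²r²/4 + 2g|φ^GP|²] φ^GP = μ^GP φ^GP with μ^GP = E^GP_{g,Ω} + 2g ∫ |φ^GP|⁴, and suppose the modulus |φ^GP| attains its maximum. Then the GP density ρ^GP = |φ^GP|² satisfies 2g ‖ρ^GP‖_∞ ≤ μ^GP − inf_{x∈ℝ³} (V(x) − Ω²r²/4). -/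
noncomputable section

open MeasureTheory Filter Topology Real

/-!
At a maximum point `x₀` of `|φ|`, every function `t ↦ |φ (x₀ + t e_k)|²` has a maximum at `0`,
so its second derivative there is `≤ 0`. For the covariant derivative `D = d/dt - i a` with real
`a` one has `(φ̄ Dφ)' = |Dφ|² + φ̄ D²φ`, hence `Re (φ̄ (∇ - iA_Ω)² φ) (x₀) ≤ 0`. Multiplying the
GP equation at `x₀` by `φ̄ (x₀)` then gives `V - Ω²r²/4 + 2g|φ|² ≤ μ` at `x₀`; finally `|φ (x₀)|²`
bounds the essential supremum of `ρ`, and the infimum of `V - Ω²r²/4`, finite by continuity and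
trapping, is at most its value at `x₀`.
-/

open Complex ComplexConjugate

theorem IsLocalMax.deriv_deriv_nonpos {f : ℝ → ℝ} {x₀ : ℝ} (h : IsLocalMax f x₀)
    (hc : ContinuousAt f x₀) : deriv (deriv f) x₀ ≤ 0 := by
  by_contra! hpos
  have hmin := isLocalMin_of_deriv_deriv_pos hpos h.deriv_eq_zero hc
  have hconst : f =ᶠ[𝓝 x₀] fun _ => f x₀ :=
    (hmin.and h).mono fun x hx => le_antisymm hx.2 hx.1
  have := hconst.deriv.deriv_eq
  simp only [deriv_const', deriv_const] at this
  exact hpos.ne' this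

theorem IsLocalMax.re_conj_mul_covariant_deriv_deriv_nonpos {u u' : ℝ → ℂ} {a : ℝ → ℝ}
    {c : ℂ} {t₀ : ℝ} (hmax : IsLocalMax (fun t => ‖u t‖) t₀)
    (hu : ∀ᶠ t in 𝓝 t₀, HasDerivAt u (u' t) t)
    (hg : HasDerivAt (fun t => u' t - I * a t * u t) c t₀) :
    (conj (u t₀) * (c - I * a t₀ * (u' t₀ - I * a t₀ * u t₀))).re ≤ 0 := by
  set g := fun t => u' t - I * a t * u t with hg_def
  have hq : IsLocalMax (fun t => ‖u t‖ ^ 2) t₀ :=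
    hmax.mono fun t ht => pow_le_pow_left₀ (norm_nonneg _) ht 2
  have hderiv : deriv (fun t => ‖u t‖ ^ 2) =ᶠ[𝓝 t₀] fun t => 2 * inner ℝ (u t) (g t) :=
    hu.mono fun t ht => by
      rw [ht.norm_sq.deriv, hg_def]
      simp only [Complex.inner, mul_re, sub_re, sub_im, mul_im, I_re, I_im, ofReal_re,
        ofReal_im, conj_re, conj_im]
      ring
  have hsecond := (hu.self_of_nhds.inner ℝ hg).const_mul (2 : ℝ)
  have hnonpos := hq.deriv_deriv_nonpos (hu.self_of_nhds.norm_sq).continuousAt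
  rw [hderiv.deriv_eq, hsecond.deriv] at hnonpos
  -- `(ū g)' = |g|² + ū (g' - i a g)`, so the goal is `hnonpos / 2 - |g t₀|²`.
  simp only [hg_def, Complex.inner, mul_re, sub_re, sub_im, mul_im, I_re, I_im, ofReal_re,
    ofReal_im, conj_re, conj_im] at hnonpos ⊢
  nlinarith [sq_nonneg ((u' t₀).re + a t₀ * (u t₀).im), sq_nonneg ((u' t₀).im - a t₀ * (u t₀).re)]

theorem differentiable_avec (Ω : ℝ) (k : Fin 3) :
    Differentiable ℝ (fun x : E3 => Avec Ω x k) := by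
  fin_cases k <;> simp [Avec] <;> fun_prop

theorem differentiable_covD {Ω : ℝ} {φ : E3 → ℂ} (hφ : ContDiff ℝ 2 φ) (k : Fin 3) :
    Differentiable ℝ (covD Ω φ k) := by
  have hfd : Differentiable ℝ fun x => fderiv ℝ φ x (EuclideanSpace.single k 1) :=
    ((hφ.fderiv_right (m := 1) (by norm_num)).differentiable (by norm_num)).clm_apply
      (differentiable_const _)
  have hA : Differentiable ℝ fun x : E3 => (Avec Ω x k : ℂ) :=
    ofRealCLM.differentiable.comp (differentiable_avec Ω k)
  exact hfd.sub (((differentiable_const I).mul hA).mul (hφ.differentiable (by norm_num)))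

theorem IsLocalMax.re_conj_mul_covD_covD_nonpos {Ω : ℝ} {φ : E3 → ℂ} {x₀ : E3}
    (hmax : IsLocalMax (‖φ ·‖) x₀) (hφ : ContDiff ℝ 2 φ) (k : Fin 3) :
    (conj (φ x₀) * covD Ω (covD Ω φ k) k x₀).re ≤ 0 := by
  set e : E3 := EuclideanSpace.single k 1
  set L : ℝ → E3 := fun t => x₀ + t • e
  have hL : ∀ t, HasDerivAt L e t := fun t => by
    simpa [L] using ((hasDerivAt_id t).smul_const e).const_add x₀
  have hL0 : L 0 = x₀ := by simp [L]
  have hmaxL : IsLocalMax (fun t => ‖φ (L t)‖) 0 :=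
    (hL0 ▸ hmax).comp_continuous (hL 0).continuousAt
  have hu : ∀ t, HasDerivAt (fun t => φ (L t)) (fderiv ℝ φ (L t) e) t := fun t =>
    ((hφ.differentiable (by norm_num) _).hasFDerivAt).comp_hasDerivAt t (hL t)
  have hcov : HasDerivAt (fun t => covD Ω φ k (L t)) (fderiv ℝ (covD Ω φ k) x₀ e) 0 :=
    (differentiable_covD hφ k x₀).hasFDerivAt.comp_hasDerivAt_of_eq 0 (hL 0) hL0.symm
  have := hmaxL.re_conj_mul_covariant_deriv_deriv_nonpos (Eventually.of_forall hu) hcov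
  rw [hL0] at this
  exact this

/-- `(∇ - iA_Ω)² φ` -/
def magneticLaplacian (Ω : ℝ) (φ : E3 → ℂ) (x : E3) : ℂ :=
  ∑ k : Fin 3, covD Ω (covD Ω φ k) k x

theorem IsLocalMax.re_conj_mul_magneticLaplacian_nonpos {Ω : ℝ} {φ : E3 → ℂ} {x₀ : E3}
    (hmax : IsLocalMax (‖φ ·‖) x₀) (hφ : ContDiff ℝ 2 φ) :
    (conj (φ x₀) * magneticLaplacian Ω φ x₀).re ≤ 0 := by
  rw [magneticLaplacian, Finset.mul_sum, re_sum]
  exact Finset.sum_nonpos fun k _ => hmax.re_conj_mul_covD_covD_nonpos hφ k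

theorem IsLocalMax.le_of_neg_magneticLaplacian_add_mul_eq {Ω W μ : ℝ} {φ : E3 → ℂ} {x₀ : E3}
    (hmax : IsLocalMax (‖φ ·‖) x₀) (hφ : ContDiff ℝ 2 φ) (hne : φ x₀ ≠ 0)
    (heq : -magneticLaplacian Ω φ x₀ + (W : ℂ) * φ x₀ = (μ : ℂ) * φ x₀) : W ≤ μ := by
  have hlap : magneticLaplacian Ω φ x₀ = ((W - μ : ℝ) : ℂ) * φ x₀ := by
    push_cast
    linear_combination -heq
  have h := hmax.re_conj_mul_magneticLaplacian_nonpos (Ω := Ω) hφ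
  rw [hlap, mul_left_comm, conj_mul', ← ofReal_pow, ← ofReal_mul, ofReal_re] at h
  have : 0 < ‖φ x₀‖ ^ 2 := by positivity
  nlinarith

theorem supNorm_le {ρ : E3 → ℝ} {C : ℝ} (h : ∀ x, ‖ρ x‖ ≤ C) : supNorm ρ ≤ C := by
  rw [supNorm, eLpNorm_exponent_top]
  exact ENNReal.toReal_le_of_le_ofReal ((norm_nonneg _).trans (h 0))
    (eLpNormEssSup_le_of_ae_bound (Eventually.of_forall h))

theorem continuous_radial : Continuous radial := by
  unfold radial
  fun_prop

theorem IsTrapping.bddBelow_range {V : E3 → ℝ} (htrap : IsTrapping V) (hV : Continuous V)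
    {Ω : ℝ} (hΩ : 0 ≤ Ω) : BddBelow (Set.range fun x => V x - Ω ^ 2 * (radial x) ^ 2 / 4) := by
  have hcont : Continuous fun x => V x - Ω ^ 2 * (radial x) ^ 2 / 4 := by
    have := continuous_radial
    fun_prop
  obtain ⟨xm, hxm⟩ := hcont.exists_forall_le (htrap Ω hΩ)
  exact ⟨_, Set.forall_mem_range.2 hxm⟩

theorem gp_density_sup_bound_general
    (V : E3 → ℝ)
    (hV_cont : Continuous V) (hV_trap : IsTrapping V)
    (g Ω : ℝ) (hg : 0 < g) (hΩ : 0 ≤ Ω)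
    (φ : E3 → ℂ) (hφ_smooth : ContDiff ℝ 2 φ)
    (hφ_adm : GPadm V Ω φ)
    (μ : ℝ)
    -- the GP (variational) equation `[-(∇ - iA_Ω)² + V - Ω²r²/4 + 2g|φ|²]φ = μφ`:
    (hGPeq : ∀ x : E3,
      -(∑ k : Fin 3, covD Ω (covD Ω φ k) k x)
        + ((V x - Ω^2 * (radial x)^2/4 + 2 * g * ‖φ x‖^2 : ℝ) : ℂ) * φ x
      = (μ : ℂ) * φ x)
    (hφ_max : ∃ x₀ : E3, ∀ x : E3, ‖φ x‖ ≤ ‖φ x₀‖) :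
    2 * g * supNorm (fun x => ‖φ x‖^2) ≤
      μ - sInf (Set.range fun x : E3 => V x - Ω^2 * (radial x)^2/4) := by
  obtain ⟨x₀, hx₀⟩ := hφ_max
  have hne : φ x₀ ≠ 0 := fun h0 => by
    have hzero : ∀ x, φ x = 0 := fun x => norm_le_zero_iff.mp (by simpa [h0] using hx₀ x)
    simpa [hzero] using hφ_adm.2.2.2.2.2
  have hmax : IsLocalMax (‖φ ·‖) x₀ := Eventually.of_forall hx₀
  have hpointwise := hmax.le_of_neg_magneticLaplacian_add_mul_eq hφ_smooth hne (hGPeq x₀)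
  have hinf := csInf_le (hV_trap.bddBelow_range hV_cont hΩ) (Set.mem_range_self x₀)
  have hsup : supNorm (fun x => ‖φ x‖ ^ 2) ≤ ‖φ x₀‖ ^ 2 := supNorm_le fun x => by
    rw [norm_pow, norm_norm]
    gcongr
    exact hx₀ x
  calc 2 * g * supNorm (fun x => ‖φ x‖ ^ 2) ≤ 2 * g * ‖φ x₀‖ ^ 2 := by gcongr
    _ ≤ μ - sInf (Set.range fun x : E3 => V x - Ω^2 * (radial x)^2/4) := by linarith

/-- (Bound on the GP density via the maximum principle, proof of Proposition 4.2):
if `φ^GP` is a smooth normalized GP minimizer satisfying the GP equation with chemical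
potential `μ^GP = E^GP_{g,Ω} + 2g∫|φ^GP|⁴`, and if `|φ^GP|` attains its maximum, then
`2g‖ρ^GP‖_∞ ≤ μ^GP - inf (V - Ω²r²/4)`. -/
theorem gp_density_sup_bound
    (V : E3 → ℝ) (s : ℝ)
    (hV_cont : Continuous V) (hV_nonneg : ∀ x, 0 ≤ V x)
    (hs : 2 < s) (hV_hom : HomogeneousOfDegree V s) (hV_trap : IsTrapping V)
    (g Ω : ℝ) (hg : 0 < g) (hΩ : 0 ≤ Ω)
    (φ : E3 → ℂ) (hφ_smooth : ContDiff ℝ 2 φ)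
    (hφ_adm : GPadm V Ω φ)
    (hφ_min : GPtot V g Ω φ = GPenergy V g Ω)
    (μ : ℝ)
    (hμ : μ = GPenergy V g Ω + 2 * g * ∫ x : E3, ‖φ x‖^4)
    -- the GP (variational) equation `[-(∇ - iA_Ω)² + V - Ω²r²/4 + 2g|φ|²]φ = μφ`:
    (hGPeq : ∀ x : E3,
      -(∑ k : Fin 3, covD Ω (covD Ω φ k) k x)
        + ((V x - Ω^2 * (radial x)^2/4 + 2 * g * ‖φ x‖^2 : ℝ) : ℂ) * φ x
      = (μ : ℂ) * φ x)
    (hφ_max : ∃ x₀ : E3, ∀ x : E3, ‖φ x‖ ≤ ‖φ x₀‖) :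
    2 * g * supNorm (fun x => ‖φ x‖^2) ≤
      μ - sInf (Set.range fun x : E3 => V x - Ω^2 * (radial x)^2/4) :=
  gp_density_sup_bound_general V hV_cont hV_trap g Ω hg hΩ φ hφ_smooth hφ_adm μ hGPeq hφ_max
end
end
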